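/- The unilateral shift S on ℓ²(ℕ) (S e_n = e_{n+1}) is not a norm limit of complex symmetric operators. -/

import Mathlib

/-!
If `‖T - S‖ = ε` with `S` an isometry, then `‖T y‖ ≥ (1 - ε) ‖y‖` for every `y`. For a complex
symmetric `T = C T* C` the conjugation `C` is isometric, so `T*` obeys the same lower bound. But
`S*` kills the unit vector `e 0`, whence `‖T* (e 0)‖ ≤ ε`. Together `1 - ε ≤ ε`: every complex
symmetric operator lies at distance at least `1/2` from the shift.
-/

open Filter Topology ContinuousLinearMap

noncomputable section

def IsConjugation {H : Type*} [NormedAddCommGroup H] [InnerProductSpace ℂ H]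
    (C : H → H) : Prop :=
  (∀ x y, C (x + y) = C x + C y) ∧
  (∀ (a : ℂ) (x : H), C (a • x) = (starRingEnd ℂ a) • C x) ∧
  (∀ x, ‖C x‖ = ‖x‖) ∧
  (∀ x, C (C x) = x)

def IsCSO {H : Type*} [NormedAddCommGroup H] [InnerProductSpace ℂ H]
    [CompleteSpace H] (T : H →L[ℂ] H) : Prop :=
  ∃ C : H → H, IsConjugation C ∧ ∀ x, T x = C (adjoint T (C x))

abbrev L2 : Type := lp (fun _ : ℕ => ℂ) 2

def e (n : ℕ) : L2 := lp.single 2 n 1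

namespace HilbertBasis

variable {ι 𝕜 E F : Type*} [RCLike 𝕜] [NormedAddCommGroup E] [InnerProductSpace 𝕜 E]
  [NormedAddCommGroup F] [InnerProductSpace 𝕜 F]

theorem ext_inner (b : HilbertBasis ι 𝕜 E) {x y : E}
    (h : ∀ i, inner 𝕜 (b i) x = inner 𝕜 (b i) y) : x = y :=
  b.repr.injective <| lp.ext <| funext fun i => by simp only [b.repr_apply_apply, h]

theorem adjoint_comp_self_eq_one [CompleteSpace E] [CompleteSpace F] (b : HilbertBasis ι 𝕜 E)
    {u : E →L[𝕜] F} (hu : Orthonormal 𝕜 (u ∘ b)) : adjoint u ∘L u = 1 := by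
  classical
  refine ext_on (s := Set.range b) (Submodule.dense_iff_topologicalClosure_eq_top.mpr
    b.dense_span) ?_
  rintro _ ⟨i, rfl⟩
  refine b.ext_inner fun j => ?_
  rw [comp_apply, adjoint_inner_right, one_apply_eq_self]
  exact (orthonormal_iff_ite.mp hu j i).trans (orthonormal_iff_ite.mp b.orthonormal j i).symm

end HilbertBasis

section PerturbedIsometry

variable {𝕜 E F : Type*}

theorem one_sub_norm_sub_mul_le_norm_apply [NontriviallyNormedField 𝕜]
    [SeminormedAddCommGroup E] [SeminormedAddCommGroup F] [NormedSpace 𝕜 E] [NormedSpace 𝕜 F]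
    {S T : E →L[𝕜] F} (hS : ∀ x, ‖S x‖ = ‖x‖) (x : E) :
    (1 - ‖T - S‖) * ‖x‖ ≤ ‖T x‖ := by
  have hdiff : ‖S x - T x‖ ≤ ‖T - S‖ * ‖x‖ := by
    rw [norm_sub_rev, ← sub_apply]
    exact le_opNorm _ x
  have := norm_sub_norm_le (S x) (T x)
  rw [hS] at this
  linarith

theorem norm_adjoint_apply_le_of_adjoint_apply_eq_zero [RCLike 𝕜] [NormedAddCommGroup E]
    [InnerProductSpace 𝕜 E] [CompleteSpace E] [NormedAddCommGroup F] [InnerProductSpace 𝕜 F]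
    [CompleteSpace F] {S T : E →L[𝕜] F} {x : F} (hx : adjoint S x = 0) :
    ‖adjoint T x‖ ≤ ‖T - S‖ * ‖x‖ := by
  have hTx : adjoint T x = adjoint (T - S) x := by rw [map_sub, sub_apply, hx, sub_zero]
  rw [hTx, ← adjoint.norm_map (T - S)]
  exact le_opNorm _ x

end PerturbedIsometry

section ComplexSymmetric

variable {H : Type*} [NormedAddCommGroup H] [InnerProductSpace ℂ H] [CompleteSpace H]

theorem IsCSO.exists_norm_eq_norm_apply_eq_norm_adjoint_apply {T : H →L[ℂ] H} (hT : IsCSO T)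
    (x : H) : ∃ y, ‖y‖ = ‖x‖ ∧ ‖T y‖ = ‖adjoint T x‖ := by
  obtain ⟨C, ⟨-, -, hCnorm, hCC⟩, hTC⟩ := hT
  exact ⟨C x, hCnorm x, by rw [hTC, hCnorm, hCC]⟩

theorem IsCSO.one_half_le_norm_sub {S T : H →L[ℂ] H} (hT : IsCSO T) (hS : ∀ x, ‖S x‖ = ‖x‖)
    {x : H} (hx₀ : x ≠ 0) (hx : adjoint S x = 0) : 1 / 2 ≤ ‖T - S‖ := by
  obtain ⟨y, hyx, hTy⟩ := hT.exists_norm_eq_norm_apply_eq_norm_adjoint_apply x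
  have hbound : (1 - ‖T - S‖) * ‖x‖ ≤ ‖T - S‖ * ‖x‖ :=
    calc (1 - ‖T - S‖) * ‖x‖ = (1 - ‖T - S‖) * ‖y‖ := by rw [hyx]
      _ ≤ ‖T y‖ := one_sub_norm_sub_mul_le_norm_apply hS y
      _ = ‖adjoint T x‖ := hTy
      _ ≤ ‖T - S‖ * ‖x‖ := norm_adjoint_apply_le_of_adjoint_apply_eq_zero hx
  have := le_of_mul_le_mul_right hbound (norm_pos_iff.mpr hx₀)
  linarith

end ComplexSymmetric

namespace L2

def basis : HilbertBasis ℕ ℂ L2 := .ofRepr (LinearIsometryEquiv.refl ℂ L2)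

theorem coe_basis : ⇑basis = e :=
  funext fun n => (basis.repr_symm_single n).symm

variable {S : L2 →L[ℂ] L2}

theorem norm_shift_apply (hS : ∀ n, S (e n) = e (n + 1)) (x : L2) : ‖S x‖ = ‖x‖ := by
  have hSe : ⇑S ∘ e = e ∘ Nat.succ := funext hS
  refine (norm_map_iff_adjoint_comp_self S).mpr (basis.adjoint_comp_self_eq_one ?_) x
  rw [coe_basis, hSe, ← coe_basis]
  exact basis.orthonormal.comp _ Nat.succ_injective

theorem adjoint_shift_e_zero (hS : ∀ n, S (e n) = e (n + 1)) : adjoint S (e 0) = 0 :=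
  basis.ext_inner fun m => by
    rw [adjoint_inner_right, inner_zero_right, coe_basis, hS, ← coe_basis]
    exact basis.orthonormal.inner_eq_zero m.succ_ne_zero

end L2

/-- The unilateral shift on `ℓ²(ℕ)` is not a norm limit of complex symmetric
operators. -/
theorem shift_not_norm_limit_CSO (S : L2 →L[ℂ] L2)
    (hS : ∀ n, S (e n) = e (n + 1)) :
    ¬ ∃ Tseq : ℕ → (L2 →L[ℂ] L2), (∀ n, IsCSO (Tseq n)) ∧
      Tendsto Tseq atTop (𝓝 S) := by
  rintro ⟨T, hT, hTS⟩
  have he₀ : e 0 ≠ 0 := L2.coe_basis ▸ L2.basis.orthonormal.ne_zero 0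
  obtain ⟨n, hn⟩ := (Metric.tendsto_nhds.mp hTS _ one_half_pos).exists
  have hfar := (hT n).one_half_le_norm_sub (L2.norm_shift_apply hS) he₀
    (L2.adjoint_shift_e_zero hS)
  rw [dist_eq_norm] at hn
  linarith

end
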